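/- With a(g₁,g₂) = ζ₈^{3(g₁² − g₂²)} on ℤ/4ℤ × ℤ/4ℤ, the Gauss sum ∑_{x ∈ ℤ/4ℤ × ℤ/4ℤ} a(x) equals 4. -/

import Mathlib

/-- The quadratic form `a(g₁,g₂) = ζ₈^(3(g₁² - g₂²))` on `ℤ/4 × ℤ/4`,
where `ζ₈ = exp(2πi/8)`. -/
noncomputable def quadA (x : ZMod 4 × ZMod 4) : ℂ :=
  Complex.exp (2 * Real.pi * Complex.I / 8) ^ (3 * ((x.1.val : ℤ) ^ 2 - (x.2.val : ℤ) ^ 2))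

/-! Writing `ζ = ζ₈`, the summand factors as `ζ^(3g₁²) · (ζ⁻¹)^(3g₂²)`, so the sum is `S(ζ) · S(ζ⁻¹)` with
`S(z) = ∑_{k ∈ ℤ/4} z^(3k²)`. For any `z` with `z⁴ = -1` the terms are `1, z³, z¹² = -1, z²⁷ = z³`,
so `S(z) = 2z³`, and the sum is `2ζ³ · 2ζ⁻³ = 4`. -/

theorem sum_zmod_four_pow_three_mul_sq {R : Type*} [CommRing R] (z : R) (hz : z ^ 4 = -1) :
    ∑ k : ZMod 4, z ^ (3 * k.val ^ 2) = 2 * z ^ 3 := by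
  change ∑ k : Fin 4, z ^ (3 * k.val ^ 2) = 2 * z ^ 3
  simp only [Fin.sum_univ_four, Fin.val_zero, Fin.val_one, Fin.val_two,
    show ((3 : Fin 4) : ℕ) = 3 from rfl]
  linear_combination (z ^ 8 - z ^ 4 + 1 + z ^ 3 * (z ^ 4 - 1) * (z ^ 16 + z ^ 8 + 1)) * hz

theorem quadA_eq_mul (x : ZMod 4 × ZMod 4) :
    quadA x = Complex.exp (2 * Real.pi * Complex.I / 8) ^ (3 * x.1.val ^ 2) *
      (Complex.exp (2 * Real.pi * Complex.I / 8))⁻¹ ^ (3 * x.2.val ^ 2) := by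
  rw [quadA, mul_sub, zpow_sub₀ (Complex.exp_ne_zero _), inv_pow, div_eq_mul_inv]
  norm_cast

theorem exp_two_pi_I_div_eight_pow_four : Complex.exp (2 * Real.pi * Complex.I / 8) ^ 4 = -1 := by
  rw [← Complex.exp_nat_mul, ← Complex.exp_pi_mul_I]
  ring_nf

theorem quadA_gauss_sum : ∑ x : ZMod 4 × ZMod 4, quadA x = 4 := by
  set ζ := Complex.exp (2 * Real.pi * Complex.I / 8)
  have hζ : ζ ^ 4 = -1 := exp_two_pi_I_div_eight_pow_four
  have hζinv : ζ⁻¹ ^ 4 = -1 := by rw [inv_pow, hζ, inv_neg, inv_one]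
  calc ∑ x : ZMod 4 × ZMod 4, quadA x
      = (∑ k : ZMod 4, ζ ^ (3 * k.val ^ 2)) * ∑ k : ZMod 4, ζ⁻¹ ^ (3 * k.val ^ 2) := by
        simp only [quadA_eq_mul, Fintype.sum_prod_type, Finset.sum_mul_sum]
        rfl
    _ = 2 * ζ ^ 3 * (2 * ζ⁻¹ ^ 3) := by
        rw [sum_zmod_four_pow_three_mul_sq ζ hζ, sum_zmod_four_pow_three_mul_sq ζ⁻¹ hζinv]
    _ = 4 := by
        rw [inv_pow, mul_mul_mul_comm, mul_inv_cancel₀ (pow_ne_zero _ (Complex.exp_ne_zero _))]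
        norm_num
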